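/- Let φ : ℝ → ℝ be strictly convex and differentiable, and let P, Q be probability measures on ℝ with quantile functions F_P^←, F_Q^←. If ∫₀¹ [ φ(F_P^←(x)) − φ(F_Q^←(x)) − φ'(F_Q^←(x))·(F_P^←(x) − F_Q^←(x)) ] dx = 0 (the integral being of a nonnegative integrand), then F_P^←(x) = F_Q^←(x) for Lebesgue-almost all x ∈ (0,1), and consequently P = Q. -/

import Mathlib

/-!
The Bregman divergence of a strictly convex differentiable function is nonnegative and vanishes
only on the diagonal, so a vanishing integral forces `F_P^← = F_Q^←` a.e. on `(0,1)`. Since the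
quantile function satisfies the Galois connection `F^←(x) ≤ z ↔ x ≤ F(z)` for `0 < x < 1`, its
law under Lebesgue measure on `(0,1)` is the underlying measure; a.e. equal quantile functions
therefore push Lebesgue measure forward to the same measure, and `P = Q`.
-/

open MeasureTheory Set

/-- Cumulative distribution function of a measure on `ℝ`. -/
noncomputable def cdf (P : Measure ℝ) (z : ℝ) : ℝ := (P (Iic z)).toReal

/-- Quantile function (generalized inverse of the cdf). -/
noncomputable def quantile (P : Measure ℝ) (x : ℝ) : ℝ := sInf {z : ℝ | x ≤ cdf P z}

open Filter Topology

section Quantile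

variable (P : Measure ℝ) [IsProbabilityMeasure P]

lemma cdf_eq_probabilityTheory_cdf : cdf P = ProbabilityTheory.cdf P :=
  funext fun z => (ProbabilityTheory.cdf_eq_real P z).symm

lemma nonempty_setOf_le_cdf {x : ℝ} (hx : x < 1) : {z | x ≤ cdf P z}.Nonempty := by
  rw [cdf_eq_probabilityTheory_cdf]
  obtain ⟨z, hz⟩ := ((ProbabilityTheory.tendsto_cdf_atTop P).eventually_const_lt hx).exists
  exact ⟨z, hz.le⟩

lemma bddBelow_setOf_le_cdf {x : ℝ} (hx : 0 < x) : BddBelow {z | x ≤ cdf P z} := by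
  rw [cdf_eq_probabilityTheory_cdf]
  obtain ⟨a, ha⟩ :=
    eventually_atBot.1 ((ProbabilityTheory.tendsto_cdf_atBot P).eventually_lt_const hx)
  exact ⟨a, fun z hz => le_of_not_ge fun hza => (ha z hza).not_ge hz⟩

lemma monotone_cdf : Monotone (cdf P) := by
  rw [cdf_eq_probabilityTheory_cdf]
  exact ProbabilityTheory.monotone_cdf P

variable {P}

-- Right-continuity of the cdf is what puts `quantile P x` itself into `{z | x ≤ cdf P z}`.
lemma le_cdf_quantile {x : ℝ} (hx : x < 1) : x ≤ cdf P (quantile P x) := by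
  have hright : ∀ z ∈ Ioi (quantile P x), x ≤ cdf P z := fun z hz => by
    obtain ⟨w, hw, hwz⟩ := exists_lt_of_csInf_lt (nonempty_setOf_le_cdf P hx) hz
    exact hw.trans (monotone_cdf P hwz.le)
  rw [cdf_eq_probabilityTheory_cdf] at hright ⊢
  exact ge_of_tendsto ((ProbabilityTheory.cdf P).right_continuous _ |>.mono Ioi_subset_Ici_self)
    (eventually_nhdsWithin_of_forall hright)

lemma quantile_le_iff {x z : ℝ} (hx₀ : 0 < x) (hx₁ : x < 1) :
    quantile P x ≤ z ↔ x ≤ cdf P z :=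
  ⟨fun h => (le_cdf_quantile hx₁).trans (monotone_cdf P h),
    fun h => csInf_le (bddBelow_setOf_le_cdf P hx₀) h⟩

variable (P)

lemma monotoneOn_quantile : MonotoneOn (quantile P) (Ioo 0 1) := fun _ ha _ hb hab =>
  (quantile_le_iff ha.1 ha.2).2 <| hab.trans <| (quantile_le_iff hb.1 hb.2).1 le_rfl

lemma aemeasurable_quantile : AEMeasurable (quantile P) (volume.restrict (Ioo 0 1)) :=
  aemeasurable_restrict_of_monotoneOn measurableSet_Ioo (monotoneOn_quantile P)

lemma volume_Ioo_inter_Iic {c : ℝ} (hc : c ≤ 1) :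
    volume (Ioo 0 1 ∩ Iic c) = ENNReal.ofReal c := by
  have hae : (Ioo 0 1 ∩ Iic c : Set ℝ) =ᵐ[volume] (Ioc 0 1 ∩ Iic c : Set ℝ) :=
    Ioo_ae_eq_Ioc.inter (ae_eq_refl _)
  rw [measure_congr hae, Ioc_inter_Iic, min_eq_right hc, Real.volume_Ioc, sub_zero]

theorem map_quantile_volume_restrict_Ioo : (volume.restrict (Ioo 0 1)).map (quantile P) = P := by
  refine Measure.ext_of_Iic _ _ fun z => ?_
  have hpre : Ioo 0 1 ∩ quantile P ⁻¹' Iic z = Ioo 0 1 ∩ Iic (cdf P z) := by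
    ext x
    simp only [mem_inter_iff, mem_preimage, mem_Iic, and_congr_right_iff]
    exact fun hx => quantile_le_iff hx.1 hx.2
  rw [Measure.map_apply_of_aemeasurable (aemeasurable_quantile P) measurableSet_Iic,
    Measure.restrict_apply' measurableSet_Ioo, inter_comm, hpre, cdf_eq_probabilityTheory_cdf,
    volume_Ioo_inter_Iic (ProbabilityTheory.cdf_le_one P z), ProbabilityTheory.ofReal_cdf]

end Quantile

section Bregman

variable {φ : ℝ → ℝ}

noncomputable def bregmanDiv (φ : ℝ → ℝ) (s t : ℝ) : ℝ := φ s - φ t - deriv φ t * (s - t)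

lemma StrictConvexOn.bregmanDiv_pos {S : Set ℝ} (hφ : StrictConvexOn ℝ S φ) {s t : ℝ}
    (hs : s ∈ S) (ht : t ∈ S) (hd : DifferentiableAt ℝ φ t) (hst : s ≠ t) :
    0 < bregmanDiv φ s t := by
  unfold bregmanDiv
  rcases hst.lt_or_gt with hlt | hgt
  · have hslope := hφ.slope_lt_deriv hs ht hlt hd
    rw [slope_def_field, div_lt_iff₀ (sub_pos.2 hlt)] at hslope
    nlinarith
  · have hslope := hφ.deriv_lt_slope ht hs hgt hd
    rw [slope_def_field, lt_div_iff₀ (sub_pos.2 hgt)] at hslope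
    nlinarith

lemma ae_eq_of_lintegral_bregmanDiv_eq_zero {α : Type*} [MeasurableSpace α] {μ : Measure α}
    (hφ : StrictConvexOn ℝ univ φ) (hd : Differentiable ℝ φ) {f g : α → ℝ}
    (hf : AEMeasurable f μ) (hg : AEMeasurable g μ)
    (h : ∫⁻ x, ENNReal.ofReal (bregmanDiv φ (f x) (g x)) ∂μ = 0) : f =ᵐ[μ] g := by
  have hφm : Measurable φ := hd.continuous.measurable
  have hφ'm : Measurable (deriv φ) := measurable_deriv φ
  have hmeas : AEMeasurable (fun x => ENNReal.ofReal (bregmanDiv φ (f x) (g x))) μ := by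
    unfold bregmanDiv
    fun_prop
  filter_upwards [(lintegral_eq_zero_iff' hmeas).1 h] with x hx
  by_contra hne
  rw [Pi.zero_apply, ENNReal.ofReal_eq_zero] at hx
  exact hx.not_gt (hφ.bregmanDiv_pos (mem_univ _) (mem_univ _) (hd _) hne)

end Bregman

/-- If the (nonnegative-integrand) Bregman divergence between the quantile
functions of `P` and `Q` vanishes, then the quantile functions agree Lebesgue-a.e. on
`(0,1)`, and consequently `P = Q`. -/
theorem stmt15 (φ : ℝ → ℝ) (hφ : StrictConvexOn ℝ Set.univ φ) (hd : Differentiable ℝ φ)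
    (P Q : Measure ℝ) [IsProbabilityMeasure P] [IsProbabilityMeasure Q]
    (hzero : ∫⁻ x in Ioo (0:ℝ) 1,
        ENNReal.ofReal (φ (quantile P x) - φ (quantile Q x)
          - deriv φ (quantile Q x) * (quantile P x - quantile Q x)) = 0) :
    (∀ᵐ x ∂(volume.restrict (Ioo (0:ℝ) 1)), quantile P x = quantile Q x) ∧ P = Q := by
  have hae : quantile P =ᵐ[volume.restrict (Ioo 0 1)] quantile Q :=
    ae_eq_of_lintegral_bregmanDiv_eq_zero hφ hd (aemeasurable_quantile P)
      (aemeasurable_quantile Q) hzero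
  refine ⟨hae, ?_⟩
  rw [← map_quantile_volume_restrict_Ioo P, ← map_quantile_volume_restrict_Ioo Q,
    Measure.map_congr hae]
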